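/- arXiv:0912.4591 — 6 statements merged into one kernel-verified Lean document; each statement's English description precedes it below -/
import Mathlib

section
/- For every α > 0 and λ > 0 there exists a positive integer m₀ with the following property. Set T₀ = exp(m₀^{α/2}) and γ_k = exp(−exp(k^{α/4})) for k ∈ ℕ. Let N be a random variable whose distribution is Poisson with parameter λ, and define the random variable R by R = (log N)^{2/α} if N ≥ T₀ and R = 0 otherwise. Then for every real t > 0 one has ∏_{k = max(⌈t⌉, m₀)}^{∞} (1 − γ_k) ≤ P(R < t). -/
/-!
Only the first factor of the product matters, so it suffices to show `P(R ≥ t) ≤ exp (-E)` with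
`E = exp (M ^ (α/4))`, `M = max ⌈t⌉ m₀`. On the event `R ≥ t` one has
`N ≥ exp (max t m₀ ^ (α/2)) ≥ exp ((M - 1) ^ (α/2)) ≥ E`, the last step because
`M ≤ (M - 1)²` for `M ≥ 3`. The Poisson tail satisfies `P(N ≥ n) ≤ λⁿ/n! ≤ exp (-n)` as soon as
`n ≥ e² λ`, which holds for `n = ⌈E⌉` once `m₀` is large.
-/

open MeasureTheory Filter Real
open scoped Nat

lemma tprod_le_of_nonneg_of_le_one {f : ℕ → ℝ} (h0 : ∀ i, 0 ≤ f i) (h1 : ∀ i, f i ≤ 1) (i : ℕ) :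
    ∏' j, f j ≤ f i := by
  have hbdd : BddBelow (Set.range fun s : Finset ℕ => ∏ j ∈ s, f j) :=
    ⟨0, by rintro _ ⟨s, rfl⟩; exact Finset.prod_nonneg fun j _ => h0 j⟩
  have hprod : HasProd f (⨅ s : Finset ℕ, ∏ j ∈ s, f j) :=
    tendsto_atTop_ciInf (Finset.prod_anti_set_of_le_one h0 h1) hbdd
  rw [hprod.tprod_eq]
  simpa using ciInf_le hbdd {i}

lemma one_sub_le_toReal_of_measure_compl_le {Ω : Type*} [MeasurableSpace Ω] {P : Measure Ω}
    [IsProbabilityMeasure P] {s : Set Ω} {ε : ℝ} (hε : 0 ≤ ε) (h : P sᶜ ≤ ENNReal.ofReal ε) :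
    1 - ε ≤ (P s).toReal := by
  have hle : 1 ≤ P s + ENNReal.ofReal ε := by
    simpa using (measure_univ_le_add_compl (μ := P) s).trans (by gcongr)
  have := ENNReal.toReal_mono (by finiteness) hle
  rw [ENNReal.toReal_add (measure_ne_top P s) ENNReal.ofReal_ne_top, ENNReal.toReal_ofReal hε,
    ENNReal.toReal_one] at this
  linarith

section PoissonTail

lemma hasSum_one_poisson (lam : ℝ) : HasSum (fun k : ℕ => exp (-lam) * lam ^ k / k !) 1 := by
  have h := (Real.exp_eq_exp_ℝ ▸ NormedSpace.expSeries_div_hasSum_exp lam).mul_left (exp (-lam))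
  simpa [mul_div_assoc, ← exp_add] using h

variable {lam : ℝ}

lemma poisson_weight_add_le (hlam : 0 ≤ lam) (n k : ℕ) :
    exp (-lam) * lam ^ (n + k) / (n + k)! ≤ lam ^ n / n ! * (exp (-lam) * lam ^ k / k !) := by
  have hfac : (n ! * k ! : ℝ) ≤ (n + k)! := by
    exact_mod_cast Nat.le_of_dvd (Nat.factorial_pos _)
      (Nat.factorial_mul_factorial_dvd_factorial_add n k)
  calc exp (-lam) * lam ^ (n + k) / (n + k)! ≤ exp (-lam) * lam ^ (n + k) / (n ! * k !) := by
        gcongr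
  _ = lam ^ n / n ! * (exp (-lam) * lam ^ k / k !) := by ring

lemma pow_div_factorial_le_exp_neg (hlam : 0 < lam) {n : ℕ} (hn : exp 2 * lam ≤ n) :
    lam ^ n / n ! ≤ exp (-n) := by
  have hn0 : (0 : ℝ) < n := (by positivity : 0 < exp 2 * lam).trans_le hn
  have hratio : lam / n ≤ exp (-2) := by
    rw [div_le_iff₀ hn0, exp_neg, ← div_eq_inv_mul, le_div_iff₀ (exp_pos 2)]
    linarith
  calc lam ^ n / n ! = (lam / n) ^ n * ((n : ℝ) ^ n / n !) := by
        rw [div_pow, ← mul_div_assoc, div_mul_cancel₀ _ (pow_ne_zero _ hn0.ne')]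
  _ ≤ exp (-2) ^ n * exp n := by
        gcongr
        exact pow_div_factorial_le_exp _ hn0.le n
  _ = exp (-n) := by
        rw [← exp_nat_mul, ← exp_add]; ring_nf

variable {Ω : Type*} [MeasurableSpace Ω] {P : Measure Ω} {N : Ω → ℕ}

lemma measure_ge_le_ofReal_pow_div_factorial (hlam : 0 ≤ lam)
    (hN : ∀ k : ℕ, P {ω | N ω = k} = ENNReal.ofReal (exp (-lam) * lam ^ k / k !)) (n : ℕ) :
    P {ω | n ≤ N ω} ≤ ENNReal.ofReal (lam ^ n / n !) := by
  have hsub : {ω | n ≤ N ω} ⊆ ⋃ k : ℕ, {ω | N ω = n + k} := fun ω hω =>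
    Set.mem_iUnion.2 ⟨N ω - n, by simp only [Set.mem_ofPred_eq] at hω ⊢; omega⟩
  have hsum := (hasSum_one_poisson lam).mul_left (lam ^ n / n !)
  calc P {ω | n ≤ N ω} ≤ ∑' k : ℕ, P {ω | N ω = n + k} :=
        (measure_mono hsub).trans (measure_iUnion_le _)
  _ ≤ ∑' k : ℕ, ENNReal.ofReal (lam ^ n / n ! * (exp (-lam) * lam ^ k / k !)) := by
        simp_rw [hN]
        exact ENNReal.tsum_le_tsum fun k =>
          ENNReal.ofReal_le_ofReal (poisson_weight_add_le hlam n k)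
  _ = ENNReal.ofReal (lam ^ n / n !) := by
        rw [← ENNReal.ofReal_tsum_of_nonneg (fun k => by positivity) hsum.summable, hsum.tsum_eq,
          mul_one]

end PoissonTail

lemma exp_rpow_max_le_of_le_ite {α t m x : ℝ} (hα : 0 < α) (ht : 0 < t) (hm : 0 ≤ m)
    (h : t ≤ if exp (m ^ (α / 2)) ≤ x then log x ^ (2 / α) else 0) :
    exp (max t m ^ (α / 2)) ≤ x := by
  split_ifs at h with hx
  · have hx0 : 0 < x := (exp_pos _).trans_le hx
    have hlog : t ^ (α / 2) ≤ log x := by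
      have hlog0 : 0 ≤ log x := (rpow_nonneg hm _).trans ((le_log_iff_exp_le hx0).2 hx)
      calc t ^ (α / 2) ≤ (log x ^ (2 / α)) ^ (α / 2) := by gcongr
      _ = log x := by rw [← rpow_mul hlog0, show 2 / α * (α / 2) = 1 by field_simp, rpow_one]
    rcases le_total t m with htm | hmt
    · rwa [max_eq_right htm]
    · rw [max_eq_left hmt, ← exp_log hx0]
      exact exp_le_exp.2 hlog
  · exact absurd h (not_le.2 ht)

lemma rpow_le_sub_one_rpow_two_mul {x p : ℝ} (hx : 3 ≤ x) (hp : 0 ≤ p) :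
    x ^ p ≤ (x - 1) ^ (2 * p) := by
  rw [rpow_mul (by linarith), rpow_two]
  gcongr
  nlinarith

lemma natCast_max_ceil_sub_one_le {t : ℝ} (ht : 0 ≤ t) (m : ℕ) :
    ((max ⌈t⌉₊ m : ℕ) : ℝ) - 1 ≤ max t m := by
  rcases le_total ⌈t⌉₊ m with h | h
  · simp [max_eq_right h]
  · rw [max_eq_left h]
    linarith [Nat.ceil_lt_add_one ht, le_max_left t m]

/-- Lemma 2.4 (rober): for every `α, lam > 0` there is `m₀ ∈ ℕ`, `m₀ > 0`, such that,
with `T₀ = exp(m₀^{α/2})` and `γ_k = exp(−exp(k^{α/4}))`, for every Poisson(`lam`)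
random variable `N` and the derived variable `R = (log N)^{2/α} · 1_{N ≥ T₀}`,
one has `∏_{k = max(⌈t⌉, m₀)}^{∞} (1 − γ_k) ≤ P(R < t)` for all `t > 0`. -/
theorem rober (α lam : ℝ) (hα : 0 < α) (hlam : 0 < lam) :
    ∃ m₀ : ℕ, 0 < m₀ ∧
      ∀ (Ω : Type) (_ : MeasurableSpace Ω) (P : Measure Ω) (_ : IsProbabilityMeasure P)
        (N : Ω → ℕ),
        (∀ k : ℕ,
          P {ω | N ω = k} = ENNReal.ofReal (Real.exp (-lam) * lam ^ k / (Nat.factorial k))) →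
        ∀ t : ℝ, 0 < t →
          (∏' j : ℕ,
              (1 - Real.exp (-Real.exp (((max (Nat.ceil t) m₀ + j : ℕ) : ℝ) ^ (α / 4)))))
            ≤ (P {ω |
                (if Real.exp ((m₀ : ℝ) ^ (α / 2)) ≤ (N ω : ℝ)
                  then Real.log (N ω) ^ (2 / α) else 0) < t}).toReal := by
  have hexp : Tendsto (fun m : ℕ => exp ((m : ℝ) ^ (α / 4))) atTop atTop :=
    tendsto_exp_atTop.comp ((tendsto_rpow_atTop (by positivity)).comp tendsto_natCast_atTop_atTop)
  obtain ⟨m₀, hm₀, hm₀lam⟩ :=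
    ((eventually_ge_atTop 3).and (hexp.eventually_ge_atTop (exp 2 * lam))).exists
  refine ⟨m₀, by omega, fun Ω _ P _ N hN t ht => ?_⟩
  set S :=
    {ω | (if exp ((m₀ : ℝ) ^ (α / 2)) ≤ (N ω : ℝ) then Real.log (N ω) ^ (2 / α) else 0) < t}
  set M := max ⌈t⌉₊ m₀
  set E := exp ((M : ℝ) ^ (α / 4))
  have hM : (3 : ℝ) ≤ M := by exact_mod_cast hm₀.trans (le_max_right _ _)
  have hEN : ∀ ω ∈ Sᶜ, E ≤ N ω := fun ω hω =>
    calc E ≤ exp (((M : ℝ) - 1) ^ (2 * (α / 4))) :=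
          exp_le_exp.2 (rpow_le_sub_one_rpow_two_mul hM (by positivity))
    _ ≤ exp (max t m₀ ^ (α / 2)) := by
          rw [show 2 * (α / 4) = α / 2 by ring]
          gcongr
          · linarith
          · exact natCast_max_ceil_sub_one_le ht.le m₀
    _ ≤ N ω := exp_rpow_max_le_of_le_ite hα ht m₀.cast_nonneg (not_lt.1 hω)
  have hEn : exp 2 * lam ≤ ⌈E⌉₊ :=
    hm₀lam.trans ((exp_le_exp.2 (by gcongr; exact le_max_right _ _)).trans (Nat.le_ceil E))
  have htail : P Sᶜ ≤ ENNReal.ofReal (exp (-E)) :=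
    calc _ ≤ P {ω | ⌈E⌉₊ ≤ N ω} := measure_mono fun ω hω => Nat.ceil_le.2 (hEN ω hω)
    _ ≤ ENNReal.ofReal (exp (-⌈E⌉₊)) :=
          (measure_ge_le_ofReal_pow_div_factorial hlam.le hN _).trans
            (ENNReal.ofReal_le_ofReal (pow_div_factorial_le_exp_neg hlam hEn))
    _ ≤ ENNReal.ofReal (exp (-E)) := by gcongr; exact Nat.le_ceil E
  calc _ ≤ 1 - exp (-E) := by
        refine (tprod_le_of_nonneg_of_le_one (fun j => ?_) (fun j => ?_) 0).trans_eq (by simp [E])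
        · simp only [sub_nonneg, exp_le_one_iff, neg_nonpos]; positivity
        · simp only [sub_le_self_iff]; positivity
  _ ≤ _ := one_sub_le_toReal_of_measure_compl_le (exp_pos _).le htail
end

section
/- Let d ≥ 1 be an integer and α > 0, and set γ_m = exp(−exp(m^{α/4})) and ℓ_m = 2(m+1)+1 for m ∈ ℕ. Then there exists m₁ ∈ ℕ such that for every integer m ≥ m₁ there exist real numbers u, v ∈ (0,1) satisfying (1−u)(1−v)^{ℓ_m^d} ≥ ℓ_m^d · γ_m, (1−u)·u^{ℓ_m^d} ≥ ℓ_m^d · γ_m, and 1 − u·v ≤ 2^{−m+1}. -/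
open Filter Asymptotics Real

lemma kdep_aux_log (c : ℝ) (r : ℝ) (hr : 0 < r) :
    ∀ᶠ x : ℝ in atTop, c * Real.log (2 * x + 3) ≤ x ^ r := by
  have h0 : Real.log =o[atTop] fun x : ℝ => x ^ r := isLittleO_log_rpow_atTop hr
  have ht : Tendsto (fun x : ℝ => 2 * x + 3) atTop atTop := by
    apply tendsto_atTop_add_const_right
    exact (tendsto_id.const_mul_atTop (by norm_num : (0:ℝ) < 2))
  have h2 : (fun x : ℝ => Real.log (2 * x + 3)) =o[atTop] fun x => (2 * x + 3) ^ r :=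
    h0.comp_tendsto ht
  have h3 : (fun x : ℝ => (2 * x + 3) ^ r) =O[atTop] fun x => x ^ r := by
    apply IsBigO.of_bound ((5:ℝ) ^ r)
    filter_upwards [eventually_ge_atTop (3:ℝ)] with x hx
    have hx0 : (0:ℝ) ≤ x := by linarith
    rw [Real.norm_eq_abs, Real.norm_eq_abs, abs_of_nonneg (Real.rpow_nonneg (by linarith) r),
      abs_of_nonneg (Real.rpow_nonneg hx0 r)]
    calc (2 * x + 3) ^ r ≤ (5 * x) ^ r :=
          Real.rpow_le_rpow (by linarith) (by linarith) hr.le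
      _ = 5 ^ r * x ^ r := Real.mul_rpow (by norm_num) hx0
  have h4 : (fun x : ℝ => c * Real.log (2 * x + 3)) =o[atTop] fun x => x ^ r :=
    (h2.trans_isBigO h3).const_mul_left c
  have h5 := h4.eventuallyLE
  filter_upwards [h5, eventually_ge_atTop (0:ℝ)] with x hx hx0
  calc c * Real.log (2 * x + 3) ≤ ‖c * Real.log (2 * x + 3)‖ := le_norm_self _
    _ ≤ ‖x ^ r‖ := hx
    _ = x ^ r := by rw [Real.norm_eq_abs, abs_of_nonneg (Real.rpow_nonneg hx0 r)]

/-- Quantitative core of Lemma 2.5 (kdep): with `γ_m = exp(−exp(m^{α/4}))` and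
`ℓ_m = 2(m+1)+1`, for all sufficiently large `m` there exist `u, v ∈ (0,1)` with
`(1−u)(1−v)^{ℓ_m^d} ≥ ℓ_m^d γ_m`, `(1−u)u^{ℓ_m^d} ≥ ℓ_m^d γ_m`, and `1 − uv ≤ 2^{−m+1}`. -/
theorem kdep_core (d : ℕ) (hd : 1 ≤ d) (α : ℝ) (hα : 0 < α) :
    ∃ m₁ : ℕ, ∀ m : ℕ, m₁ ≤ m →
      ∃ u v : ℝ, u ∈ Set.Ioo (0 : ℝ) 1 ∧ v ∈ Set.Ioo (0 : ℝ) 1 ∧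
        ((((2 * (m + 1) + 1) ^ d : ℕ) : ℝ) * Real.exp (-Real.exp ((m : ℝ) ^ (α / 4)))
            ≤ (1 - u) * (1 - v) ^ ((2 * (m + 1) + 1) ^ d)) ∧
        ((((2 * (m + 1) + 1) ^ d : ℕ) : ℝ) * Real.exp (-Real.exp ((m : ℝ) ^ (α / 4)))
            ≤ (1 - u) * u ^ ((2 * (m + 1) + 1) ^ d)) ∧
        1 - u * v ≤ (2 : ℝ) ^ (1 - (m : ℤ)) := by
  have hr : 0 < α / 4 := by positivity
  have hev : ∀ᶠ m : ℕ in atTop,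
      ((d : ℝ) + 2) * Real.log (2 * (m : ℝ) + 3) ≤ (m : ℝ) ^ (α / 4) :=
    tendsto_natCast_atTop_atTop.eventually (kdep_aux_log ((d : ℝ) + 2) (α / 4) hr)
  obtain ⟨m₀, hm₀⟩ := eventually_atTop.mp hev
  refine ⟨max m₀ 1, fun m hm => ?_⟩
  have hm0 : m₀ ≤ m := le_trans (le_max_left _ _) hm
  have hm1 : 1 ≤ m := le_trans (le_max_right _ _) hm
  set L : ℕ := (2 * (m + 1) + 1) ^ d with hLdef
  set ε : ℝ := ((2 : ℝ) ^ (m + 1))⁻¹ with hεdef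
  have h2m : (0 : ℝ) < 2 ^ m := by positivity
  have h2m1 : (0 : ℝ) < 2 ^ (m + 1) := by positivity
  have h2m1ge : (2 : ℝ) ≤ 2 ^ (m + 1) := by
    calc (2:ℝ) = 2 ^ 1 := (pow_one 2).symm
      _ ≤ 2 ^ (m + 1) := pow_le_pow_right₀ (by norm_num) (by omega)
  have hε0 : 0 < ε := by positivity
  have hεhalf : ε ≤ 1 / 2 := by
    rw [hεdef]
    rw [inv_le_comm₀ h2m1 (by norm_num)]
    simpa using h2m1ge
  -- the key exponential lower bound
  set Ebig : ℝ := Real.exp ((m : ℝ) ^ (α / 4)) with hEdef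
  have hy : (0 : ℝ) < 2 * (m : ℝ) + 3 := by positivity
  have hpow_le : (2 * (m : ℝ) + 3) ^ (d + 2) ≤ Ebig := by
    calc (2 * (m : ℝ) + 3) ^ (d + 2)
        = Real.exp (Real.log (2 * (m : ℝ) + 3) * ((d + 2 : ℕ) : ℝ)) := by
          rw [← Real.rpow_natCast (2 * (m : ℝ) + 3) (d + 2), Real.rpow_def_of_pos hy]
      _ = Real.exp (((d : ℝ) + 2) * Real.log (2 * (m : ℝ) + 3)) := by
          push_cast; ring_nf
      _ ≤ Ebig := Real.exp_le_exp.mpr (hm₀ m hm0)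
  -- natural-number bound : (m+1)(L+1) + L ≤ (2m+3)^(d+2)
  have hL1 : (1 : ℝ) ≤ (L : ℝ) := by
    have : 1 ≤ L := Nat.one_le_pow _ _ (by omega)
    exact_mod_cast this
  have hLcast : (L : ℝ) = (2 * (m : ℝ) + 3) ^ d := by
    rw [hLdef]; push_cast; ring_nf
  have hnat : ((m : ℝ) + 1) * ((L : ℝ) + 1) + (L : ℝ) ≤ (2 * (m : ℝ) + 3) ^ (d + 2) := by
    set X : ℝ := 2 * (m : ℝ) + 3 with hXdef
    have hX3 : (3 : ℝ) ≤ X := by rw [hXdef]; have : (0:ℝ) ≤ (m:ℝ) := Nat.cast_nonneg m; linarith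
    have hmX : (m : ℝ) + 1 ≤ X := by rw [hXdef]; linarith [(Nat.cast_nonneg m : (0:ℝ) ≤ (m:ℝ))]
    have hXd : (1 : ℝ) ≤ X ^ d := by
      calc (1:ℝ) = 1 ^ d := (one_pow d).symm
        _ ≤ X ^ d := pow_le_pow_left₀ (by norm_num) (by linarith) d
    have hXd0 : (0 : ℝ) ≤ X ^ d := by linarith
    have hpow : X ^ (d + 2) = X ^ d * X ^ 2 := by ring
    rw [hLcast, hpow]
    nlinarith [mul_nonneg (sub_nonneg.mpr hmX) (by linarith : (0:ℝ) ≤ X ^ d + 1),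
      mul_nonneg (mul_nonneg (by linarith : (0:ℝ) ≤ X - 3) (by linarith : (0:ℝ) ≤ X)) hXd0,
      mul_nonneg (sub_nonneg.mpr hXd) (by linarith : (0:ℝ) ≤ X)]
  have hKey : ((m : ℝ) + 1) * ((L : ℝ) + 1) + (L : ℝ) ≤ Ebig := le_trans hnat hpow_le
  set K : ℝ := ((m : ℝ) + 1) * ((L : ℝ) + 1) with hKdef
  have hK0 : 0 ≤ K := by
    rw [hKdef]; positivity
  -- main estimate: L * exp(-Ebig) ≤ ε ^ (L + 1)
  have hmain : (L : ℝ) * Real.exp (-Ebig) ≤ ε ^ (L + 1) := by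
    have hstep1 : (L : ℝ) ≤ Real.exp (Ebig - K) := by
      have h := Real.add_one_le_exp (Ebig - K)
      have : (L : ℝ) ≤ Ebig - K := by rw [hKdef]; linarith
      linarith
    have hstep2 : (L : ℝ) * Real.exp (-Ebig) ≤ Real.exp (-K) := by
      calc (L : ℝ) * Real.exp (-Ebig) ≤ Real.exp (Ebig - K) * Real.exp (-Ebig) :=
            mul_le_mul_of_nonneg_right hstep1 (Real.exp_nonneg _)
        _ = Real.exp (-K) := by rw [← Real.exp_add]; ring_nf
    have hεpow : ε ^ (L + 1) = ((2 : ℝ) ^ ((m + 1) * (L + 1)))⁻¹ := by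
      rw [hεdef, ← inv_pow, ← pow_mul, inv_pow]
    have h2exp : (2 : ℝ) ^ ((m + 1) * (L + 1)) ≤ Real.exp K := by
      have h2e : (2 : ℝ) ≤ Real.exp 1 := by
        have := Real.exp_one_gt_d9; linarith
      calc (2 : ℝ) ^ ((m + 1) * (L + 1)) ≤ (Real.exp 1) ^ ((m + 1) * (L + 1)) :=
            pow_le_pow_left₀ (by norm_num) h2e _
        _ = Real.exp (((m + 1) * (L + 1) : ℕ) : ℝ) := by
            rw [← Real.exp_nat_mul]; norm_num
        _ ≤ Real.exp K := by
            apply Real.exp_le_exp.mpr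
            rw [hKdef]; push_cast; linarith
    have hstep3 : Real.exp (-K) ≤ ε ^ (L + 1) := by
      rw [hεpow, Real.exp_neg]
      exact inv_anti₀ (by positivity) h2exp
    linarith
  refine ⟨1 - ε, 1 - ε, ⟨by linarith, by linarith⟩, ⟨by linarith, by linarith⟩, ?_, ?_, ?_⟩
  · have h1 : (1 : ℝ) - (1 - ε) = ε := by ring
    rw [h1]
    calc (L : ℝ) * Real.exp (-Ebig) ≤ ε ^ (L + 1) := hmain
      _ = ε * ε ^ L := by rw [pow_succ]; ring
  · have h1 : (1 : ℝ) - (1 - ε) = ε := by ring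
    rw [h1]
    calc (L : ℝ) * Real.exp (-Ebig) ≤ ε ^ (L + 1) := hmain
      _ = ε * ε ^ L := by rw [pow_succ]; ring
      _ ≤ ε * (1 - ε) ^ L := by
          apply mul_le_mul_of_nonneg_left _ hε0.le
          exact pow_le_pow_left₀ hε0.le (by linarith) L
  · have hz : (2 : ℝ) ^ (1 - (m : ℤ)) = 2 / 2 ^ m := by
      rw [zpow_sub₀ (by norm_num : (2:ℝ) ≠ 0), zpow_one, zpow_natCast]
    rw [hz]
    have hεeq : ε * (2 ^ m * 2) = 1 := by
      rw [hεdef, pow_succ]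
      field_simp
    have h4 : (2 : ℝ) / 2 ^ m = 4 * ε := by
      have hε1 : ε = 1 / (2 ^ m * 2) := by rw [hεdef, pow_succ]; simp
      rw [hε1]
      field_simp
      ring
    rw [h4]
    nlinarith [sq_nonneg ε, hε0.le]
end

section
/- Let d ≥ 1 and let u : (Set ℝ^d) × ℝ^d → ℝ be a function. Let ξ ⊆ ℝ^d be a configuration with 0 ∈ ξ and let x ∈ ξ. If u satisfies the cycle condition at the translated configuration τ_x ξ (which contains 0), then u satisfies the cycle condition at ξ. -/
/-- A form `u` on configurations of `ℝ^d` satisfies the cycle (curl-free) condition at a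
configuration `ξ` if for every closed chain of points of `ξ` the telescoping sum of `u`
along the chain vanishes. -/
def CycleCond {d : ℕ} (u : Set (Fin d → ℝ) × (Fin d → ℝ) → ℝ) (ξ : Set (Fin d → ℝ)) : Prop :=
  ∀ n : ℕ, 0 < n → ∀ x : ℕ → (Fin d → ℝ), (∀ j ≤ n, x j ∈ ξ) → x 0 = x n →
    ∑ j ∈ Finset.range n, u ((fun y => y - x j) '' ξ, x (j + 1) - x j) = 0

theorem Set.image_sub_const_image_sub_const {G : Type*} [AddCommGroup G] (s : Set G) (a b : G) :
    (fun y => y - b) '' ((fun y => y - a) '' s) = (fun y => y - (a + b)) '' s := by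
  simp only [Set.image_image, sub_sub]

/-- A chain `z` in `ξ` and the chain `z - a` in `τ_a ξ` have the same increments and recentre
to the same configurations, so the two cycle sums agree term by term. -/
theorem CycleCond.of_image_sub_const {d : ℕ} {u : Set (Fin d → ℝ) × (Fin d → ℝ) → ℝ}
    {ξ : Set (Fin d → ℝ)} {a : Fin d → ℝ} (hcyc : CycleCond u ((fun y => y - a) '' ξ)) :
    CycleCond u ξ := by
  intro n hn z hz hclosed
  have hsum := hcyc n hn (fun j => z j - a) (fun j hj => Set.mem_image_of_mem _ (hz j hj))
    (by rw [hclosed])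
  simpa only [Set.image_sub_const_image_sub_const, add_sub_cancel, sub_sub_sub_cancel_right]
    using hsum

theorem cycleCond_of_shift_general (d : ℕ)
    (u : Set (Fin d → ℝ) × (Fin d → ℝ) → ℝ) (ξ : Set (Fin d → ℝ))
    (x : Fin d → ℝ)
    (hcyc : CycleCond u ((fun y => y - x) '' ξ)) : CycleCond u ξ :=
  hcyc.of_image_sub_const

/-- Key step in the proof of Lemma 3.5 (festicciola): the set of configurations satisfying
the cycle condition is closed under translation by its own points.  If `0 ∈ ξ`, `x ∈ ξ`,
and `u` satisfies the cycle condition at `τ_x ξ`, then it satisfies it at `ξ`. -/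
theorem cycleCond_of_shift (d : ℕ) (hd : 1 ≤ d)
    (u : Set (Fin d → ℝ) × (Fin d → ℝ) → ℝ) (ξ : Set (Fin d → ℝ))
    (h0 : (0 : Fin d → ℝ) ∈ ξ) (x : Fin d → ℝ) (hx : x ∈ ξ)
    (hcyc : CycleCond u ((fun y => y - x) '' ξ)) : CycleCond u ξ :=
  cycleCond_of_shift_general d u ξ x hcyc
end

section
/- Let d ≥ 1 be an integer, K > 0, α > 0 and ε ∈ (0,1) with (1−ε)·2^α > 1. Then sup over integers s ≥ 2 of exp(K^α s^α) · Σ_{v ∈ ℤ^d, |v| ≥ 2s−2} exp(−(1−ε)·K^α·|v|^α) is finite. -/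
/-!
Since `|v| ≥ 2s - 2` forces `s ≤ |v|/2 + 1`, and `(u + 1)^α ≤ λ u^α + B` for every `λ > 1`,
the margin `(1 - ε) 2^α > 1` gives `K^α s^α - (1 - ε) K^α |v|^α ≤ M - c |v|^α` with `c > 0`,
uniformly in `s`. The series of `exp (-c |v|^α)` over `ℤ^d` converges, being dominated by a
product of one-dimensional stretched-exponential series.
-/

open Real Filter Asymptotics Finset

/-- The Euclidean norm of an integer point of `ℤ^d`, viewed in `ℝ^d`. -/
noncomputable def euclNorm {d : ℕ} (z : Fin d → ℤ) : ℝ :=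
  Real.sqrt (∑ i, ((z i : ℝ)) ^ 2)

lemma euclNorm_nonneg {d : ℕ} (v : Fin d → ℤ) : 0 ≤ euclNorm v := Real.sqrt_nonneg _

lemma abs_le_euclNorm {d : ℕ} (v : Fin d → ℤ) (i : Fin d) : |(v i : ℝ)| ≤ euclNorm v := by
  rw [euclNorm, ← Real.sqrt_sq_eq_abs]
  exact Real.sqrt_le_sqrt (single_le_sum (fun j _ => sq_nonneg (v j : ℝ)) (mem_univ i))

lemma exists_rpow_add_one_le {α l : ℝ} (hα : 0 < α) (hl : 1 < l) :
    ∃ B : ℝ, ∀ u : ℝ, 0 ≤ u → (u + 1) ^ α ≤ l * u ^ α + B := by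
  set r := l ^ α⁻¹
  have hr : 1 < r := one_lt_rpow (by linarith) (inv_pos.2 hα)
  set T := (r - 1)⁻¹
  refine ⟨(T + 1) ^ α, fun u hu => ?_⟩
  rcases le_total u T with huT | hTu
  · have : (u + 1) ^ α ≤ (T + 1) ^ α := by gcongr
    linarith [show 0 ≤ l * u ^ α by positivity]
  · have hu1 : u + 1 ≤ r * u := by
      have : 1 ≤ (r - 1) * u :=
        calc 1 = (r - 1) * T := (mul_inv_cancel₀ (sub_pos.2 hr).ne').symm
          _ ≤ (r - 1) * u := by gcongr
      linarith
    calc (u + 1) ^ α ≤ (r * u) ^ α := by gcongr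
      _ = l * u ^ α := by
        rw [mul_rpow (by positivity) hu, ← rpow_mul (by linarith), inv_mul_cancel₀ hα.ne',
          rpow_one]
      _ ≤ l * u ^ α + (T + 1) ^ α := le_add_of_nonneg_right (by positivity)

lemma exists_lt_forall_rpow_le {α θ : ℝ} (hα : 0 < α) (hθ : 1 < θ * 2 ^ α) :
    ∃ μ < θ, ∃ M : ℝ, ∀ s t : ℝ, 0 ≤ s → 0 ≤ t → s ≤ t / 2 + 1 → s ^ α ≤ μ * t ^ α + M := by
  have h2α : (0 : ℝ) < 2 ^ α := by positivity
  obtain ⟨B, hB⟩ := exists_rpow_add_one_le (l := (1 + θ * 2 ^ α) / 2) hα (by linarith)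
  refine ⟨(1 + θ * 2 ^ α) / 2 / 2 ^ α, (div_lt_iff₀ h2α).2 (by linarith), B,
    fun s t hs ht hst => ?_⟩
  calc s ^ α ≤ (t / 2 + 1) ^ α := by gcongr
    _ ≤ (1 + θ * 2 ^ α) / 2 * (t / 2) ^ α + B := hB _ (by positivity)
    _ = (1 + θ * 2 ^ α) / 2 / 2 ^ α * t ^ α + B := by rw [div_rpow ht zero_le_two]; ring

lemma summable_exp_neg_mul_rpow_natCast {c α : ℝ} (hc : 0 < c) (hα : 0 < α) :
    Summable fun n : ℕ => exp (-(c * (n : ℝ) ^ α)) := by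
  have ho := (isLittleO_exp_neg_mul_rpow_atTop hc (-2 / α)).comp_tendsto
    ((tendsto_rpow_atTop hα).comp tendsto_natCast_atTop_atTop)
  refine summable_of_isBigO_nat (Real.summable_nat_rpow.2 (by norm_num : (-2 : ℝ) < -1)) ?_
  refine ho.isBigO.congr (fun n => by simp [neg_mul]) (fun n => ?_)
  simp only [Function.comp_apply]
  rw [← rpow_mul n.cast_nonneg, mul_div_cancel₀ _ hα.ne']

lemma summable_exp_neg_mul_abs_rpow_intCast {c α : ℝ} (hc : 0 < c) (hα : 0 < α) :
    Summable fun k : ℤ => exp (-(c * |(k : ℝ)| ^ α)) := by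
  have h := summable_exp_neg_mul_rpow_natCast hc hα
  apply Summable.of_nat_of_neg
  · refine h.congr fun n => ?_
    simp only [Int.cast_natCast, Nat.abs_cast]
  · refine h.congr fun n => ?_
    simp only [Int.cast_neg, Int.cast_natCast, abs_neg, Nat.abs_cast]

lemma summable_prod_fin_pi {β : Type*} {f : β → ℝ} (hf0 : ∀ b, 0 ≤ f b) (hf : Summable f)
    (d : ℕ) : Summable fun v : Fin d → β => ∏ i, f (v i) := by
  induction d with
  | zero => exact Summable.of_finite
  | succ d ih =>
    have hprod : Summable fun p : β × (Fin d → β) => f p.1 * ∏ i, f (p.2 i) :=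
      Summable.mul_of_nonneg (f := f) (g := fun v : Fin d → β => ∏ i, f (v i)) hf ih hf0
        (fun v => prod_nonneg fun i _ => hf0 (v i))
    refine ((Fin.consEquiv fun _ => β).summable_iff).1 (hprod.congr fun p => ?_)
    simp [Fin.consEquiv, Fin.prod_univ_succ]

lemma summable_exp_neg_mul_euclNorm_rpow (d : ℕ) {c α : ℝ} (hc : 0 < c) (hα : 0 < α) :
    Summable fun v : Fin d → ℤ => exp (-(c * euclNorm v ^ α)) := by
  set c' := c / (d + 1)
  have hc' : 0 < c' := by positivity
  refine (summable_prod_fin_pi (fun _ => (exp_pos _).le)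
    (summable_exp_neg_mul_abs_rpow_intCast hc' hα) d).of_nonneg_of_le
    (fun _ => (exp_pos _).le) fun v => ?_
  rw [← exp_sum, exp_le_exp, sum_neg_distrib, neg_le_neg_iff]
  have hd : (d : ℝ) * c' ≤ c := by
    rw [mul_div_assoc', div_le_iff₀ (by positivity)]
    nlinarith
  calc ∑ i, c' * |(v i : ℝ)| ^ α ≤ ∑ _i : Fin d, c' * euclNorm v ^ α := by
        gcongr with i; exact abs_le_euclNorm v i
    _ = d * c' * euclNorm v ^ α := by simp [mul_assoc]
    _ ≤ c * euclNorm v ^ α := by gcongr; exact rpow_nonneg (euclNorm_nonneg v) α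

theorem lecN_ratio_bound_general (d : ℕ) (K α ε : ℝ) (hK : 0 < K) (hα : 0 < α)
    (hεα : 1 < (1 - ε) * (2 : ℝ) ^ α) :
    ∃ C : ℝ, ∀ s : ℕ, 2 ≤ s →
      Real.exp (K ^ α * (s : ℝ) ^ α) *
        (∑' v : Fin d → ℤ,
            if 2 * (s : ℝ) - 2 ≤ euclNorm v
              then Real.exp (-((1 - ε) * K ^ α) * euclNorm v ^ α) else 0)
        ≤ C := by
  obtain ⟨μ, hμ, M, hM⟩ := exists_lt_forall_rpow_le hα hεα
  have hA : 0 < K ^ α := rpow_pos_of_pos hK α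
  have hc : 0 < K ^ α * (1 - ε - μ) := mul_pos hA (sub_pos.2 hμ)
  have hg := (summable_exp_neg_mul_euclNorm_rpow d hc hα).mul_left (exp (K ^ α * M))
  refine ⟨∑' v : Fin d → ℤ, exp (K ^ α * M) * exp (-(K ^ α * (1 - ε - μ) * euclNorm v ^ α)),
    fun s hs => ?_⟩
  have hbound : ∀ v : Fin d → ℤ,
      exp (K ^ α * (s : ℝ) ^ α) * (if 2 * (s : ℝ) - 2 ≤ euclNorm v
        then exp (-((1 - ε) * K ^ α) * euclNorm v ^ α) else 0) ≤
      exp (K ^ α * M) * exp (-(K ^ α * (1 - ε - μ) * euclNorm v ^ α)) := by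
    intro v
    split_ifs with hv
    · rw [← exp_add, ← exp_add, exp_le_exp]
      have hs2 : (2 : ℝ) ≤ s := by exact_mod_cast hs
      have := mul_le_mul_of_nonneg_left
        (hM s (euclNorm v) (by positivity) (euclNorm_nonneg v) (by linarith)) hA.le
      linarith
    · rw [mul_zero]; positivity
  rw [← tsum_mul_left]
  exact Summable.tsum_le_tsum hbound
    (hg.of_nonneg_of_le (fun v => by split_ifs <;> positivity) hbound) hg

/-- Key estimate in Lemmas 4.3 (lecN) and 4.4 (lecda): for `d ≥ 1`, `K, α > 0` and
`ε ∈ (0,1)` with `(1−ε)2^α > 1`, the quantity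
`exp(K^α s^α) · Σ_{v ∈ ℤ^d, |v| ≥ 2s−2} exp(−(1−ε)K^α|v|^α)`
is bounded uniformly over integers `s ≥ 2`. -/
theorem lecN_ratio_bound (d : ℕ) (hd : 1 ≤ d) (K α ε : ℝ) (hK : 0 < K) (hα : 0 < α)
    (hε : ε ∈ Set.Ioo (0 : ℝ) 1) (hεα : 1 < (1 - ε) * (2 : ℝ) ^ α) :
    ∃ C : ℝ, ∀ s : ℕ, 2 ≤ s →
      Real.exp (K ^ α * (s : ℝ) ^ α) *
        (∑' v : Fin d → ℤ,
            if 2 * (s : ℝ) - 2 ≤ euclNorm v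
              then Real.exp (-((1 - ε) * K ^ α) * euclNorm v ^ α) else 0)
        ≤ C :=
  lecN_ratio_bound_general d K α ε hK hα hεα
end

section
/- For every α > 1 and c > 0 there exists c₁ > 0 such that for every integer N ≥ 0 and all nonnegative reals x₀, x₁, …, x_N: exp(2c·(log(1 + Σ_{i=0}^{N} x_i))^α) ≤ exp(c₁·(log(N+1))^α) · (N+1)^{−1} · Σ_{i=0}^{N} exp(c₁·(log(1 + x_i))^α). -/
/-!
Let `x_j` be the largest of the `x_i`. Then `1 + Σ xᵢ ≤ (N+1)(1 + x_j)`, so with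
`a = log(N+1)` and `b = log(1 + x_j)` the convexity bound `(a+b)^α ≤ 2^(α-1)(a^α + b^α)`
gives `exp(2c(log(1 + Σ xᵢ))^α) ≤ exp(c₂a^α) exp(c₂b^α)` with `c₂ = 2c·2^(α-1)`.
The factor `N+1` is absorbed by enlarging the constant: `a` vanishes or is at least `log 2`,
hence `N + 1 = exp a ≤ exp((log 2)^(1-α) a^α)`. Finally `exp(c₁b^α)` is one term of the sum.
-/

open Finset Real

theorem Finset.exists_one_add_sum_le_card_mul {ι : Type*} (s : Finset ι) (hs : s.Nonempty)
    (f : ι → ℝ) : ∃ j ∈ s, 1 + ∑ i ∈ s, f i ≤ #s * (1 + f j) := by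
  obtain ⟨j, hj, hmax⟩ := s.exists_max_image f hs
  refine ⟨j, hj, ?_⟩
  have hsum : ∑ i ∈ s, f i ≤ #s * f j := by
    simpa only [nsmul_eq_mul] using s.sum_le_card_nsmul f (f j) hmax
  have hcard : (1 : ℝ) ≤ #s := by exact_mod_cast hs.card_pos
  linarith

theorem Finset.exists_log_one_add_sum_le {ι : Type*} (s : Finset ι) (hs : s.Nonempty)
    {f : ι → ℝ} (hf : ∀ i ∈ s, 0 ≤ f i) :
    ∃ j ∈ s, log (1 + ∑ i ∈ s, f i) ≤ log #s + log (1 + f j) := by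
  obtain ⟨j, hj, hle⟩ := s.exists_one_add_sum_le_card_mul hs f
  refine ⟨j, hj, ?_⟩
  have hcard : (0 : ℝ) < #s := by exact_mod_cast hs.card_pos
  have hfj : 0 < 1 + f j := by linarith [hf j hj]
  rw [← log_mul hcard.ne' hfj.ne']
  exact log_le_log (by linarith [sum_nonneg hf]) hle

theorem Real.rpow_add_le_mul_rpow_add_rpow {a b p : ℝ} (ha : 0 ≤ a) (hb : 0 ≤ b)
    (hp : 1 ≤ p) : (a + b) ^ p ≤ 2 ^ (p - 1) * (a ^ p + b ^ p) := by
  lift a to NNReal using ha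
  lift b to NNReal using hb
  exact_mod_cast NNReal.rpow_add_le_mul_rpow_add_rpow a b hp

theorem Real.le_rpow_one_sub_mul_rpow {t a p : ℝ} (ht : 0 < t) (hta : t ≤ a) (hp : 1 ≤ p) :
    a ≤ t ^ (1 - p) * a ^ p := by
  have ha : 0 < a := ht.trans_le hta
  have hinv : t ^ (1 - p) * t ^ (p - 1) = 1 := by
    rw [← rpow_add ht]; norm_num
  have hmono : t ^ (p - 1) ≤ a ^ (p - 1) := rpow_le_rpow ht.le hta (by linarith)
  calc a = t ^ (1 - p) * t ^ (p - 1) * a := by rw [hinv, one_mul]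
    _ ≤ t ^ (1 - p) * a ^ (p - 1) * a := by gcongr
    _ = t ^ (1 - p) * a ^ p := by rw [mul_assoc, ← rpow_add_one ha.ne']; ring_nf

theorem Real.natCast_add_one_le_exp {p : ℝ} (hp : 1 ≤ p) (n : ℕ) :
    (n : ℝ) + 1 ≤ exp (log 2 ^ (1 - p) * log ((n : ℝ) + 1) ^ p) := by
  have hn : (0 : ℝ) < n + 1 := by positivity
  refine (exp_log hn).symm.le.trans (exp_le_exp.mpr ?_)
  rcases n.eq_zero_or_pos with rfl | hpos
  · simp [zero_rpow (by linarith : p ≠ 0)]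
  · refine le_rpow_one_sub_mul_rpow (log_pos one_lt_two) (log_le_log two_pos ?_) hp
    have : (1 : ℝ) ≤ n := by exact_mod_cast hpos
    linarith

/-- Display (4.16) in the proof of Lemma 4.4 (lecda): for `α > 1` and `c > 0` there is
`c₁ > 0` such that for all `N ∈ ℕ` and nonnegative reals `x₀, …, x_N`,
`exp(2c(log(1 + Σ xᵢ))^α) ≤ exp(c₁(log(N+1))^α) · (N+1)⁻¹ · Σ exp(c₁(log(1+xᵢ))^α)`. -/
theorem lecda_convexity_bound (α c : ℝ) (hα : 1 < α) (hc : 0 < c) :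
    ∃ c₁ : ℝ, 0 < c₁ ∧
      ∀ (N : ℕ) (x : ℕ → ℝ), (∀ i ≤ N, 0 ≤ x i) →
        Real.exp (2 * c * Real.log (1 + ∑ i ∈ Finset.range (N + 1), x i) ^ α)
          ≤ Real.exp (c₁ * Real.log ((N : ℝ) + 1) ^ α) * ((N : ℝ) + 1)⁻¹ *
              ∑ i ∈ Finset.range (N + 1), Real.exp (c₁ * Real.log (1 + x i) ^ α) := by
  set c₂ := 2 * c * 2 ^ (α - 1) with hc₂
  set K := log 2 ^ (1 - α)
  have hK : 0 < K := rpow_pos_of_pos (log_pos one_lt_two) _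
  refine ⟨c₂ + K, by positivity, fun N x hx => ?_⟩
  have hx' : ∀ i ∈ range (N + 1), 0 ≤ x i := fun i hi =>
    hx i (Nat.lt_succ_iff.mp (mem_range.mp hi))
  obtain ⟨j, hj, hlog⟩ := (range (N + 1)).exists_log_one_add_sum_le nonempty_range_add_one hx'
  rw [card_range, Nat.cast_add_one] at hlog
  set a := log ((N : ℝ) + 1)
  set b := log (1 + x j)
  have ha : 0 ≤ a := log_nonneg (by simp)
  have hb : 0 ≤ b := log_nonneg (by linarith [hx' j hj])
  have hpow : log (1 + ∑ i ∈ range (N + 1), x i) ^ α ≤ 2 ^ (α - 1) * (a ^ α + b ^ α) :=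
    (rpow_le_rpow (log_nonneg (by linarith [sum_nonneg hx'])) hlog (by linarith)).trans
      (rpow_add_le_mul_rpow_add_rpow ha hb hα.le)
  have hN : exp (c₂ * a ^ α) ≤ exp ((c₂ + K) * a ^ α) * ((N : ℝ) + 1)⁻¹ := by
    rw [le_mul_inv_iff₀ (by positivity), add_mul, exp_add]
    gcongr
    exact natCast_add_one_le_exp hα.le N
  calc exp (2 * c * log (1 + ∑ i ∈ range (N + 1), x i) ^ α)
      ≤ exp (c₂ * a ^ α) * exp (c₂ * b ^ α) := by
        rw [← exp_add, exp_le_exp, ← mul_add, hc₂, mul_assoc (2 * c)]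
        gcongr
    _ ≤ exp ((c₂ + K) * a ^ α) * ((N : ℝ) + 1)⁻¹ * exp ((c₂ + K) * b ^ α) := by
        gcongr
        linarith
    _ ≤ _ := by
        gcongr
        exact single_le_sum (f := fun i => exp ((c₂ + K) * log (1 + x i) ^ α))
          (fun i _ => (exp_pos _).le) hj
end

section
/- Let θ > 1 and let R : ℕ → [0, ∞) satisfy lim_{n→∞} R(n)/n^θ = 0. Assume that for every ε > 0 and every δ > 0 there exists n₀ ∈ ℕ such that R(n) ≤ ε·n + δ·R(5n) for all n ≥ n₀. Then lim_{n→∞} R(n)/n = 0. -/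
/-!
Fix `δ > 0` so small that `b δ < 1` and `δ b^θ < 1`. Unrolling `R(n) ≤ ε n + δ R(b n)` `k` times gives
`R(n) ≤ ε n ∑ (b δ)^i + δ^k R(b^k n) ≤ ε n / (1 - b δ) + δ^k R(b^k n)`, and the a priori bound
`R(m) = o(m^θ)` makes the remainder `δ^k R(b^k n) = o((δ b^θ)^k n^θ)` vanish as `k → ∞`.
Since `ε` is arbitrary while `δ` stays fixed, `R(n) = o(n)`.
-/

open Filter Topology Finset Asymptotics

lemma le_sum_pow_mul_add_pow_mul_of_le_add_mul {a x : ℕ → ℝ} {δ : ℝ} (hδ : 0 ≤ δ)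
    (h : ∀ k, a k ≤ x k + δ * a (k + 1)) (k : ℕ) :
    a 0 ≤ ∑ i ∈ range k, δ ^ i * x i + δ ^ k * a k := by
  induction k with
  | zero => simp
  | succ k ih =>
    have step : δ ^ k * a k ≤ δ ^ k * x k + δ ^ (k + 1) * a (k + 1) := by
      calc δ ^ k * a k ≤ δ ^ k * (x k + δ * a (k + 1)) := by gcongr; exact h k
        _ = δ ^ k * x k + δ ^ (k + 1) * a (k + 1) := by ring
    rw [sum_range_succ]
    linarith

section Bootstrap

variable {R : ℕ → ℝ} {θ δ : ℝ} {b : ℕ}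

lemma tendsto_pow_mul_apply_pow_mul_nhds_zero
    (hpoly : Tendsto (fun n : ℕ => R n / (n : ℝ) ^ θ) atTop (𝓝 0)) (hb : 1 < b) (hδ : 0 ≤ δ)
    (hδb : δ * (b : ℝ) ^ θ < 1) {n : ℕ} (hn : 0 < n) :
    Tendsto (fun k => δ ^ k * R (b ^ k * n)) atTop (𝓝 0) := by
  have hscale : Tendsto (fun k => b ^ k * n) atTop atTop :=
    tendsto_atTop_mono (fun k => Nat.le_mul_of_pos_right _ hn)
      (tendsto_pow_atTop_atTop_of_one_lt hb)
  have hsplit : ∀ k, δ ^ k * R (b ^ k * n) =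
      (δ * (b : ℝ) ^ θ) ^ k * (n : ℝ) ^ θ * (R (b ^ k * n) / ((b ^ k * n : ℕ) : ℝ) ^ θ) := by
    intro k
    have hpow : ((b ^ k * n : ℕ) : ℝ) ^ θ = ((b : ℝ) ^ θ) ^ k * (n : ℝ) ^ θ := by
      push_cast
      rw [Real.mul_rpow (by positivity) (by positivity), Real.rpow_pow_comm (by positivity)]
    rw [hpow]
    field_simp
    ring
  simp_rw [hsplit]
  simpa using ((tendsto_pow_atTop_nhds_zero_of_lt_one (by positivity) hδb).mul_const _).mul
    (hpoly.comp hscale)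

lemma le_div_mul_of_le_mul_add_mul_apply_mul
    (hpoly : Tendsto (fun n : ℕ => R n / (n : ℝ) ^ θ) atTop (𝓝 0)) (hb : 1 < b) (hδ : 0 ≤ δ)
    (hbδ : b * δ < 1) (hδb : δ * (b : ℝ) ^ θ < 1) {ε : ℝ} (hε : 0 ≤ ε) {n₀ : ℕ}
    (hrec : ∀ n : ℕ, n₀ ≤ n → R n ≤ ε * n + δ * R (b * n)) {n : ℕ} (hn₀ : n₀ ≤ n)
    (hn : 0 < n) :
    R n ≤ ε / (1 - b * δ) * n := by
  have hstep : ∀ i, R (b ^ i * n) ≤ ε * (b ^ i * n : ℕ) + δ * R (b ^ (i + 1) * n) := by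
    intro i
    rw [pow_succ, mul_comm _ b, mul_assoc]
    exact hrec _ (hn₀.trans (Nat.le_mul_of_pos_left n (by positivity)))
  have hunrolled : ∀ k, R n ≤ ε / (1 - b * δ) * n + δ ^ k * R (b ^ k * n) := by
    intro k
    have hiter := le_sum_pow_mul_add_pow_mul_of_le_add_mul (a := fun i => R (b ^ i * n))
      (x := fun i => ε * (b ^ i * n : ℕ)) hδ hstep k
    have hgeom : ∑ i ∈ range k, δ ^ i * (ε * (b ^ i * n : ℕ)) =
        ε * n * ∑ i ∈ range k, ((b : ℝ) * δ) ^ i := by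
      rw [mul_sum]
      refine sum_congr rfl fun i _ => ?_
      push_cast
      ring
    have hgeom_le : ε * n * ∑ i ∈ range k, ((b : ℝ) * δ) ^ i ≤ ε * n / (1 - b * δ) := by
      have := geom_sum_Ico_le_of_lt_one (m := 0) (n := k) (by positivity) hbδ
      rw [← range_eq_Ico, pow_zero] at this
      calc ε * n * ∑ i ∈ range k, ((b : ℝ) * δ) ^ i ≤ ε * n * (1 / (1 - b * δ)) := by gcongr
        _ = ε * n / (1 - b * δ) := by ring
    simp only [pow_zero, one_mul] at hiter
    rw [div_mul_eq_mul_div]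
    linarith
  simpa using ge_of_tendsto' (tendsto_const_nhds.add
    (tendsto_pow_mul_apply_pow_mul_nhds_zero hpoly hb hδ hδb hn)) hunrolled

theorem isLittleO_natCast_of_le_mul_add_mul_apply_mul (hR : ∀ n, 0 ≤ R n)
    (hpoly : Tendsto (fun n : ℕ => R n / (n : ℝ) ^ θ) atTop (𝓝 0)) (hb : 1 < b)
    (hrec : ∀ ε : ℝ, 0 < ε → ∀ δ : ℝ, 0 < δ →
      ∃ n₀ : ℕ, ∀ n : ℕ, n₀ ≤ n → R n ≤ ε * n + δ * R (b * n)) :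
    R =o[atTop] (fun n : ℕ => (n : ℝ)) := by
  obtain ⟨δ, hδ, hbδ, hδb⟩ : ∃ δ : ℝ, 0 < δ ∧ b * δ < 1 ∧ δ * (b : ℝ) ^ θ < 1 := by
    have hb0 : (0 : ℝ) < b := by exact_mod_cast zero_lt_one.trans hb
    have hbθ : (0 : ℝ) < (b : ℝ) ^ θ := by positivity
    refine ⟨1 / (b + (b : ℝ) ^ θ), by positivity, ?_, ?_⟩
    · rw [mul_one_div, div_lt_one (by positivity)]; linarith
    · rw [one_div_mul_eq_div, div_lt_one (by positivity)]; linarith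
  refine isLittleO_iff.2 fun c hc => ?_
  obtain ⟨n₀, hn₀⟩ := hrec (c * (1 - b * δ)) (by nlinarith) δ hδ
  filter_upwards [eventually_ge_atTop (max n₀ 1)] with n hn
  have hbound := le_div_mul_of_le_mul_add_mul_apply_mul hpoly hb hδ.le hbδ hδb
    (by nlinarith) hn₀ (le_of_max_le_left hn) (le_of_max_le_right hn)
  rw [mul_div_cancel_right₀ _ (by linarith)] at hbound
  simpa [abs_of_nonneg (hR n)] using hbound

end Bootstrap

theorem peres_bootstrap_general (θ : ℝ) (R : ℕ → ℝ) (hR : ∀ n, 0 ≤ R n)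
    (hpoly : Tendsto (fun n : ℕ => R n / (n : ℝ) ^ θ) atTop (nhds 0))
    (hrec : ∀ ε : ℝ, 0 < ε → ∀ δ : ℝ, 0 < δ →
      ∃ n₀ : ℕ, ∀ n : ℕ, n₀ ≤ n → R n ≤ ε * n + δ * R (5 * n)) :
    Tendsto (fun n : ℕ => R n / (n : ℝ)) atTop (nhds 0) :=
  (isLittleO_natCast_of_le_mul_add_mul_apply_mul hR hpoly (by norm_num) hrec).tendsto_div_nhds_zero

/-- Peres' bootstrap scheme (proof of Lemma 6.10 (pisolino)): if `R : ℕ → [0,∞)`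
satisfies the a priori bound `R(n) = o(n^θ)` for some `θ > 1` and the recursion
`R(n) ≤ ε n + δ R(5n)` (for all `ε, δ > 0` and all large `n`), then `R(n) = o(n)`. -/
theorem peres_bootstrap (θ : ℝ) (hθ : 1 < θ) (R : ℕ → ℝ) (hR : ∀ n, 0 ≤ R n)
    (hpoly : Tendsto (fun n : ℕ => R n / (n : ℝ) ^ θ) atTop (nhds 0))
    (hrec : ∀ ε : ℝ, 0 < ε → ∀ δ : ℝ, 0 < δ →
      ∃ n₀ : ℕ, ∀ n : ℕ, n₀ ≤ n → R n ≤ ε * n + δ * R (5 * n)) :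
    Tendsto (fun n : ℕ => R n / (n : ℝ)) atTop (nhds 0) :=
  peres_bootstrap_general θ R hR hpoly hrec
end
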